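/- arXiv:2504.15273 — 2 statements merged into one kernel-verified Lean document; each statement's English description precedes it below -/
import Mathlib

section
/- Suppose ν₀, ν₁ : [a,b] → ℝ are monotone increasing with ν₁ ≥ ν₀ pointwise, F₀, F₁ are CDFs on [a,b] with F₁(s) ≤ F₀(s) for all s, and the 'true' subgroup effect ∫ ν₁ dF₁ - ∫ ν₀ dF₀ equals 0. Then the surrogate-based subgroup effect ∫ ν₀ dF₁ - ∫ ν₀ dF₀ also equals 0. -/
/-!
Within the support `[a, b]`, `ν₀ ≤ ν₁` gives `∫ ν₀ dμ₁ ≤ ∫ ν₁ dμ₁ = ∫ ν₀ dμ₀`. Conversely, since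
`μ₁` stochastically dominates `μ₀`, every monotone integrand has a larger mean under `μ₁`: by the
layer-cake formula this reduces to comparing the measures of the upper sets `{t < f}`, and those
of lower sets of a separable linear order are limits of measures of the rays `Iic x`.
-/

open MeasureTheory Set

theorem lintegral_ofReal_le_of_measure_lt_le {β : Type*} [MeasurableSpace β] {μ ν : Measure β}
    {g : β → ℝ} (hg : 0 ≤ g) (hgμ : AEMeasurable g μ) (hgν : AEMeasurable g ν)
    (h : ∀ t, μ {x | t < g x} ≤ ν {x | t < g x}) :
    ∫⁻ x, .ofReal (g x) ∂μ ≤ ∫⁻ x, .ofReal (g x) ∂ν := by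
  rw [lintegral_eq_lintegral_meas_lt μ (.of_forall hg) hgμ,
    lintegral_eq_lintegral_meas_lt ν (.of_forall hg) hgν]
  exact lintegral_mono fun t => h t

def StochasticallyDominates {α : Type*} [Preorder α] [MeasurableSpace α] (ν μ : Measure α) :
    Prop :=
  ∀ s, ν (Iic s) ≤ μ (Iic s)

variable {α : Type*} [LinearOrder α] [TopologicalSpace α] [OrderTopology α]
  [SecondCountableTopology α]

namespace StochasticallyDominates

variable [MeasurableSpace α] {μ ν : Measure α}

theorem measure_le_of_isLowerSet (h : StochasticallyDominates ν μ) {L : Set α}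
    (hL : IsLowerSet L) : ν L ≤ μ L := by
  -- gives `L` the order topology, so that continuity from below applies to families indexed by `L`
  have : OrdConnected L := hL.ordConnected
  have hunion : L = ⋃ x : L, Iic (x : α) :=
    Subset.antisymm (fun x hx => mem_iUnion.2 ⟨⟨x, hx⟩, le_rfl⟩)
      (iUnion_subset fun x _ hy => hL hy x.2)
  have hmono : Monotone fun x : L => Iic (x : α) := fun _ _ hxy => Iic_subset_Iic.2 hxy
  rw [hunion, hmono.measure_iUnion, hmono.measure_iUnion]
  exact iSup_mono fun x => h x

variable [BorelSpace α]

theorem lintegral_ofReal_le_of_antitone (h : StochasticallyDominates ν μ) {f : α → ℝ}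
    (hf : Antitone f) : ∫⁻ x, .ofReal (f x) ∂ν ≤ ∫⁻ x, .ofReal (f x) ∂μ := by
  have hf' : Antitone fun x => max (f x) 0 := fun _ _ hxy => max_le_max_right 0 (hf hxy)
  simpa using lintegral_ofReal_le_of_measure_lt_le (fun x => le_max_right (f x) 0)
    hf'.measurable.aemeasurable hf'.measurable.aemeasurable
    fun t => h.measure_le_of_isLowerSet fun _ _ hxy hx => lt_of_lt_of_le hx (hf' hxy)

variable [IsProbabilityMeasure μ] [IsProbabilityMeasure ν]

theorem measure_le_of_isUpperSet (h : StochasticallyDominates ν μ) {U : Set α}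
    (hU : IsUpperSet U) : μ U ≤ ν U := by
  have hmeas : MeasurableSet Uᶜ := hU.compl.ordConnected.measurableSet
  rw [← compl_compl U, prob_compl_eq_one_sub hmeas, prob_compl_eq_one_sub hmeas]
  exact tsub_le_tsub_left (h.measure_le_of_isLowerSet hU.compl) 1

theorem lintegral_ofReal_le_of_monotone (h : StochasticallyDominates ν μ) {f : α → ℝ}
    (hf : Monotone f) : ∫⁻ x, .ofReal (f x) ∂μ ≤ ∫⁻ x, .ofReal (f x) ∂ν := by
  have hf' : Monotone fun x => max (f x) 0 := fun _ _ hxy => max_le_max_right 0 (hf hxy)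
  simpa using lintegral_ofReal_le_of_measure_lt_le (fun x => le_max_right (f x) 0)
    hf'.measurable.aemeasurable hf'.measurable.aemeasurable
    fun t => h.measure_le_of_isUpperSet fun _ _ hxy hx => lt_of_lt_of_le hx (hf' hxy)

theorem integral_le_of_monotone (h : StochasticallyDominates ν μ) {f : α → ℝ} (hf : Monotone f)
    (hμ : Integrable f μ) (hν : Integrable f ν) : ∫ x, f x ∂μ ≤ ∫ x, f x ∂ν := by
  rw [integral_eq_lintegral_pos_part_sub_lintegral_neg_part hμ,
    integral_eq_lintegral_pos_part_sub_lintegral_neg_part hν]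
  have hpos := ENNReal.toReal_mono hν.lintegral_lt_top.ne (h.lintegral_ofReal_le_of_monotone hf)
  have hneg : (∫⁻ x, .ofReal (-f x) ∂ν).toReal ≤ (∫⁻ x, .ofReal (-f x) ∂μ).toReal :=
    ENNReal.toReal_mono hμ.neg.lintegral_lt_top.ne (h.lintegral_ofReal_le_of_antitone hf.neg)
  linarith

end StochasticallyDominates

theorem stmt4_general (a b : ℝ) (hab : a ≤ b)
    (ν₀ ν₁ : ℝ → ℝ) (hν₀ : MonotoneOn ν₀ (Icc a b))
    (hle : ∀ s ∈ Icc a b, ν₀ s ≤ ν₁ s)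
    (μ₀ μ₁ : Measure ℝ) [IsProbabilityMeasure μ₀] [IsProbabilityMeasure μ₁]
    (hs₀ : μ₀ (Icc a b)ᶜ = 0) (hs₁ : μ₁ (Icc a b)ᶜ = 0)
    (hdom : ∀ s : ℝ, μ₁ (Iic s) ≤ μ₀ (Iic s))
    (hi₀ : Integrable ν₀ μ₀) (hi₁ : Integrable ν₁ μ₁) (hi₀₁ : Integrable ν₀ μ₁)
    (hzero : (∫ s, ν₁ s ∂μ₁) - (∫ s, ν₀ s ∂μ₀) = 0) :
    (∫ s, ν₀ s ∂μ₁) - (∫ s, ν₀ s ∂μ₀) = 0 := by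
  have hsupp₀ : ∀ᵐ s ∂μ₀, s ∈ Icc a b := mem_ae_iff.2 hs₀
  have hsupp₁ : ∀ᵐ s ∂μ₁, s ∈ Icc a b := mem_ae_iff.2 hs₁
  set g := IccExtend hab fun s : Icc a b => ν₀ s
  have hg : Monotone g := Monotone.IccExtend hab fun x y hxy => hν₀ x.2 y.2 hxy
  have hg_eq : ∀ s ∈ Icc a b, g s = ν₀ s := fun s hs => IccExtend_of_mem hab _ hs
  have hg₀ : g =ᵐ[μ₀] ν₀ := hsupp₀.mono hg_eq
  have hg₁ : g =ᵐ[μ₁] ν₀ := hsupp₁.mono hg_eq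
  have hupper : ∫ s, ν₀ s ∂μ₁ ≤ ∫ s, ν₁ s ∂μ₁ := integral_mono_ae hi₀₁ hi₁ (hsupp₁.mono hle)
  have hlower : ∫ s, ν₀ s ∂μ₀ ≤ ∫ s, ν₀ s ∂μ₁ := by
    rw [← integral_congr_ae hg₀, ← integral_congr_ae hg₁]
    exact StochasticallyDominates.integral_le_of_monotone hdom hg (hi₀.congr hg₀.symm)
      (hi₀₁.congr hg₁.symm)
  linarith

/-- if the true subgroup effect is zero, so is the surrogate-based effect. -/
theorem stmt4 (a b : ℝ) (hab : a ≤ b)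
    (ν₀ ν₁ : ℝ → ℝ) (hν₀ : MonotoneOn ν₀ (Icc a b)) (hν₁ : MonotoneOn ν₁ (Icc a b))
    (hle : ∀ s ∈ Icc a b, ν₀ s ≤ ν₁ s)
    (μ₀ μ₁ : Measure ℝ) [IsProbabilityMeasure μ₀] [IsProbabilityMeasure μ₁]
    (hs₀ : μ₀ (Icc a b)ᶜ = 0) (hs₁ : μ₁ (Icc a b)ᶜ = 0)
    (hdom : ∀ s : ℝ, μ₁ (Iic s) ≤ μ₀ (Iic s))
    (hi₀ : Integrable ν₀ μ₀) (hi₁ : Integrable ν₁ μ₁) (hi₀₁ : Integrable ν₀ μ₁)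
    (hzero : (∫ s, ν₁ s ∂μ₁) - (∫ s, ν₀ s ∂μ₀) = 0) :
    (∫ s, ν₀ s ∂μ₁) - (∫ s, ν₀ s ∂μ₀) = 0 :=
  stmt4_general a b hab ν₀ ν₁ hν₀ hle μ₀ μ₁ hs₀ hs₁ hdom hi₀ hi₁ hi₀₁ hzero
end

section
/- Under assumptions (C1)-(C4) and (C7), if Δ_B = 0 then Δ_P = 0, where Δ_B and Δ_P are the pooled decompositions Δ_B = π A₁ + (1−π) A₂ and Δ_P = π P₁ + (1−π) A₂ with A₁ = ∫ν₁dF₁ − ∫ν₀dF₀, P₁ = ∫ν₀dF₁ − ∫ν₀dF₀, A₂ = ∫y dG₁ − ∫y dG₀. -/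
/-!
Superlevel sets of an antitone function are lower sets, and every lower set of `ℝ` is a
half-line `Iic c` or an increasing union of such half-lines, so the layer-cake formula turns
the dominance `F₁ ≤ F₀` of distribution functions into `∫ ν₀ dF₀ ≤ ∫ ν₀ dF₁`, i.e. `P₁ ≥ 0`;
monotonicity of the integral and `ν₀ ≤ ν₁` give `P₁ ≤ A₁`. Then `Δ_B` is a sum of two nonnegative
terms `π A₁` and `(1 - π) A₂`, so both vanish, and `0 ≤ π P₁ ≤ π A₁ = 0` forces `Δ_P = 0`.
-/

open MeasureTheory Set Filter

section StochasticDominance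

variable {μ ν : Measure ℝ}

theorem measure_iUnion_Iic_le_of_forall_measure_Iic_le (h : ∀ s, μ (Iic s) ≤ ν (Iic s))
    {u : ℕ → ℝ} (hu : Monotone u) : μ (⋃ n, Iic (u n)) ≤ ν (⋃ n, Iic (u n)) := by
  have hIic : Monotone fun n => Iic (u n) := fun m n hmn => Iic_subset_Iic.2 (hu hmn)
  rw [hIic.measure_iUnion, hIic.measure_iUnion]
  exact iSup_mono fun n => h (u n)

theorem IsLowerSet.measure_le_of_forall_measure_Iic_le (h : ∀ s, μ (Iic s) ≤ ν (Iic s))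
    {L : Set ℝ} (hL : IsLowerSet L) : μ L ≤ ν L := by
  rcases L.eq_empty_or_nonempty with rfl | hne
  · simp
  by_cases hbdd : BddAbove L
  · have hlub := isLUB_csSup hne hbdd
    have hL_eq : ⋃ x ∈ L, Iic x = L :=
      Subset.antisymm (iUnion₂_subset fun _ hx => hL.Iic_subset hx) fun _ hx =>
        mem_iUnion₂_of_mem hx self_mem_Iic
    by_cases hmem : sSup L ∈ L
    · rw [← hL_eq, hlub.biUnion_Iic_eq_Iic hmem]
      exact h _
    · obtain ⟨u, hu, hu_lim, hu_mem⟩ := exists_seq_tendsto_sSup hne hbdd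
      have hu_lt : ∀ n, u n < sSup L :=
        fun n => (hlub.1 (hu_mem n)).lt_of_ne fun he => hmem (he ▸ hu_mem n)
      rw [← hL_eq, hlub.biUnion_Iic_eq_Iio hmem, ← iUnion_Iic_eq_Iio_of_lt_of_tendsto hu_lt hu_lim]
      exact measure_iUnion_Iic_le_of_forall_measure_Iic_le h hu
  · have hL_eq : L = ⋃ n : ℕ, Iic (n : ℝ) := by
      refine (eq_univ_of_forall fun x => ?_).trans
        (eq_univ_of_forall fun x => mem_iUnion.2 (exists_nat_ge x)).symm
      obtain ⟨y, hy, hxy⟩ := not_bddAbove_iff.1 hbdd x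
      exact hL hxy.le hy
    rw [hL_eq]
    exact measure_iUnion_Iic_le_of_forall_measure_Iic_le h Nat.mono_cast

theorem integral_le_integral_of_antitone_of_forall_measure_Iic_le
    (h : ∀ s, μ (Iic s) ≤ ν (Iic s)) {f : ℝ → ℝ} (hf : Antitone f) (hf₀ : 0 ≤ f)
    (hfν : Integrable f ν) : ∫ s, f s ∂μ ≤ ∫ s, f s ∂ν := by
  have hf_meas := hf.measurable
  rw [integral_eq_lintegral_of_nonneg_ae (ae_of_all _ hf₀) hf_meas.aestronglyMeasurable,
    integral_eq_lintegral_of_nonneg_ae (ae_of_all _ hf₀) hf_meas.aestronglyMeasurable]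
  refine ENNReal.toReal_mono hfν.lintegral_lt_top.ne ?_
  rw [lintegral_eq_lintegral_meas_lt μ (ae_of_all _ hf₀) hf_meas.aemeasurable,
    lintegral_eq_lintegral_meas_lt ν (ae_of_all _ hf₀) hf_meas.aemeasurable]
  refine lintegral_mono fun t => IsLowerSet.measure_le_of_forall_measure_Iic_le h ?_
  exact fun x y hyx hx => hx.trans_le (hf hyx)

end StochasticDominance

section MonotoneOnIcc

variable {a b : ℝ} {f : ℝ → ℝ} {μ ν : Measure ℝ}

theorem MonotoneOn.monotone_IccExtend (hab : a ≤ b) (hf : MonotoneOn f (Icc a b)) :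
    Monotone (IccExtend hab ((Icc a b).domRestrict f)) :=
  (monotoneOn_iff_monotone.1 hf).IccExtend hab

theorem MonotoneOn.IccExtend_mem_Icc (hab : a ≤ b) (hf : MonotoneOn f (Icc a b)) (x : ℝ) :
    IccExtend hab ((Icc a b).domRestrict f) x ∈ Icc (f a) (f b) :=
  ⟨hf (left_mem_Icc.2 hab) (projIcc a b hab x).2 (projIcc a b hab x).2.1,
    hf (projIcc a b hab x).2 (right_mem_Icc.2 hab) (projIcc a b hab x).2.2⟩

theorem IccExtend_domRestrict_ae_eq (hab : a ≤ b) (hμ : ∀ᵐ s ∂μ, s ∈ Icc a b) :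
    IccExtend hab ((Icc a b).domRestrict f) =ᵐ[μ] f :=
  hμ.mono fun _ hs => IccExtend_of_mem hab _ hs

theorem MonotoneOn.integrable_IccExtend [IsFiniteMeasure μ] (hab : a ≤ b)
    (hf : MonotoneOn f (Icc a b)) : Integrable (IccExtend hab ((Icc a b).domRestrict f)) μ := by
  refine Integrable.of_bound (hf.monotone_IccExtend hab).measurable.aestronglyMeasurable
    (max |f a| |f b|) (ae_of_all _ fun x => ?_)
  exact abs_le_max_abs_abs (hf.IccExtend_mem_Icc hab x).1 (hf.IccExtend_mem_Icc hab x).2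

theorem MonotoneOn.integrable_of_ae_mem_Icc [IsFiniteMeasure μ] (hab : a ≤ b)
    (hf : MonotoneOn f (Icc a b)) (hμ : ∀ᵐ s ∂μ, s ∈ Icc a b) : Integrable f μ :=
  (hf.integrable_IccExtend hab).congr (IccExtend_domRestrict_ae_eq hab hμ)

theorem MonotoneOn.integral_le_integral_of_forall_measure_Iic_le [IsProbabilityMeasure μ]
    [IsProbabilityMeasure ν] (h : ∀ s, μ (Iic s) ≤ ν (Iic s)) (hab : a ≤ b)
    (hf : MonotoneOn f (Icc a b)) (hμ : ∀ᵐ s ∂μ, s ∈ Icc a b) (hν : ∀ᵐ s ∂ν, s ∈ Icc a b) :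
    ∫ s, f s ∂ν ≤ ∫ s, f s ∂μ := by
  set F := IccExtend hab ((Icc a b).domRestrict f)
  have hFμ : Integrable F μ := hf.integrable_IccExtend hab
  have hFν : Integrable F ν := hf.integrable_IccExtend hab
  have key : ∫ s, f b - F s ∂μ ≤ ∫ s, f b - F s ∂ν :=
    integral_le_integral_of_antitone_of_forall_measure_Iic_le h
      (fun x y hxy => sub_le_sub_left (hf.monotone_IccExtend hab hxy) _)
      (fun x => sub_nonneg.2 (hf.IccExtend_mem_Icc hab x).2) ((integrable_const _).sub hFν)
  rw [integral_sub (integrable_const _) hFμ, integral_sub (integrable_const _) hFν,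
    integral_congr_ae (IccExtend_domRestrict_ae_eq hab hμ),
    integral_congr_ae (IccExtend_domRestrict_ae_eq hab hν)] at key
  simp only [integral_const, probReal_univ, one_smul] at key
  linarith

end MonotoneOnIcc

theorem stmt7_general (a b : ℝ) (hab : a ≤ b) (p : ℝ) (hp : p ∈ Set.Icc (0:ℝ) 1)
    (ν₀ ν₁ : ℝ → ℝ) (hν₀ : MonotoneOn ν₀ (Icc a b))
    (hle : ∀ s ∈ Icc a b, ν₀ s ≤ ν₁ s)
    (μ₀ μ₁ : Measure ℝ) [IsProbabilityMeasure μ₀] [IsProbabilityMeasure μ₁]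
    (hs₀ : μ₀ (Icc a b)ᶜ = 0) (hs₁ : μ₁ (Icc a b)ᶜ = 0)
    (hdom : ∀ s : ℝ, μ₁ (Iic s) ≤ μ₀ (Iic s))
    (hi₁ : Integrable ν₁ μ₁)
    (G₀ G₁ : Measure ℝ)
    (hC7 : 0 ≤ (∫ y, y ∂G₁) - (∫ y, y ∂G₀))
    (hΔB : p * ((∫ s, ν₁ s ∂μ₁) - (∫ s, ν₀ s ∂μ₀))
      + (1 - p) * ((∫ y, y ∂G₁) - (∫ y, y ∂G₀)) = 0) :
    p * ((∫ s, ν₀ s ∂μ₁) - (∫ s, ν₀ s ∂μ₀))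
      + (1 - p) * ((∫ y, y ∂G₁) - (∫ y, y ∂G₀)) = 0 := by
  obtain ⟨hp₀, hp₁⟩ := hp
  have hae₀ : ∀ᵐ s ∂μ₀, s ∈ Icc a b := mem_ae_iff.2 hs₀
  have hae₁ : ∀ᵐ s ∂μ₁, s ∈ Icc a b := mem_ae_iff.2 hs₁
  have hP₁ : 0 ≤ (∫ s, ν₀ s ∂μ₁) - (∫ s, ν₀ s ∂μ₀) :=
    sub_nonneg.2 (hν₀.integral_le_integral_of_forall_measure_Iic_le hdom hab hae₁ hae₀)
  have hP₁_le_A₁ : (∫ s, ν₀ s ∂μ₁) ≤ ∫ s, ν₁ s ∂μ₁ :=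
    integral_mono_ae (hν₀.integrable_of_ae_mem_Icc hab hae₁) hi₁ (hae₁.mono hle)
  have hpP₁ := mul_nonneg hp₀ hP₁
  have hpP₁_le := mul_le_mul_of_nonneg_left (sub_le_sub_right hP₁_le_A₁ (∫ s, ν₀ s ∂μ₀)) hp₀
  have hA₂ := mul_nonneg (sub_nonneg.2 hp₁) hC7
  linarith

/-- Theorem 1.A: if `Δ_B = 0` then `Δ_P = 0`. -/
theorem stmt7 (a b : ℝ) (hab : a ≤ b) (p : ℝ) (hp : p ∈ Set.Icc (0:ℝ) 1)
    (ν₀ ν₁ : ℝ → ℝ) (hν₀ : MonotoneOn ν₀ (Icc a b)) (hν₁ : MonotoneOn ν₁ (Icc a b))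
    (hle : ∀ s ∈ Icc a b, ν₀ s ≤ ν₁ s)
    (μ₀ μ₁ : Measure ℝ) [IsProbabilityMeasure μ₀] [IsProbabilityMeasure μ₁]
    (hs₀ : μ₀ (Icc a b)ᶜ = 0) (hs₁ : μ₁ (Icc a b)ᶜ = 0)
    (hdom : ∀ s : ℝ, μ₁ (Iic s) ≤ μ₀ (Iic s))
    (hi₀ : Integrable ν₀ μ₀) (hi₁ : Integrable ν₁ μ₁) (hi₀₁ : Integrable ν₀ μ₁)
    (G₀ G₁ : Measure ℝ) [IsProbabilityMeasure G₀] [IsProbabilityMeasure G₁]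
    (hiG₀ : Integrable id G₀) (hiG₁ : Integrable id G₁)
    (hC7 : 0 ≤ (∫ y, y ∂G₁) - (∫ y, y ∂G₀))
    (hΔB : p * ((∫ s, ν₁ s ∂μ₁) - (∫ s, ν₀ s ∂μ₀))
      + (1 - p) * ((∫ y, y ∂G₁) - (∫ y, y ∂G₀)) = 0) :
    p * ((∫ s, ν₀ s ∂μ₁) - (∫ s, ν₀ s ∂μ₀))
      + (1 - p) * ((∫ y, y ∂G₁) - (∫ y, y ∂G₀)) = 0 :=
  stmt7_general a b hab p hp ν₀ ν₁ hν₀ hle μ₀ μ₁ hs₀ hs₁ hdom hi₁ G₀ G₁ hC7 hΔB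
end
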